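/- Let n ≥ 2 and 1 ≤ i ≤ n, and let α ∈ P_i. Then there exists a unique π ∈ P_{i−1} such that |α ∩ π| = n − 1 and |(α ⊖ 2) ∩ π| = n − 1. -/

import Mathlib

/-!
Common definitions: stable n-sets in `ZMod (2*n+2)`, tight/loose sets, shifts,
outer neighbors, parity, the sets `P_i`, and adjacency in the stable Kneser
graph `SG_{n,2}` (two stable n-sets are adjacent iff they are disjoint).
-/

instance (n : ℕ) : NeZero (2 * n + 2) := ⟨by omega⟩

/-- A stable n-set: a finite subset of `ZMod (2n+2)` of cardinality `n`
containing no two (cyclically) consecutive elements. -/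
def IsStable (n : ℕ) (α : Finset (ZMod (2 * n + 2))) : Prop :=
  α.card = n ∧ ∀ i : ZMod (2 * n + 2), ¬(i ∈ α ∧ i + 1 ∈ α)

/-- A set is tight if it has the form `{i, i+2, i+4, …, i+2(n-1)}`. -/
def IsTight (n : ℕ) (α : Finset (ZMod (2 * n + 2))) : Prop :=
  ∃ i : ZMod (2 * n + 2), α = (Finset.range n).image (fun k : ℕ => i + 2 * (k : ZMod (2 * n + 2)))

/-- `α ⊕ j`, the shift of `α` by `j`. -/
def oplus (n : ℕ) (α : Finset (ZMod (2 * n + 2))) (j : ZMod (2 * n + 2)) :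
    Finset (ZMod (2 * n + 2)) :=
  α.image (fun a => a + j)

/-- `α ⊖ j`, the shift of `α` by `-j`. -/
def ominus (n : ℕ) (α : Finset (ZMod (2 * n + 2))) (j : ZMod (2 * n + 2)) :
    Finset (ZMod (2 * n + 2)) :=
  α.image (fun a => a - j)

/-- `β` is an outer neighbor of `α`: they are disjoint and
`β = ((α \ {a}) ⊕ 1) ∪ {a + 2}` for some `a ∈ α`. -/
def OuterNbr (n : ℕ) (α β : Finset (ZMod (2 * n + 2))) : Prop :=
  Disjoint α β ∧ ∃ a ∈ α, β = oplus n (α.erase a) 1 ∪ {a + 2}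

/-- The parity of an element of `ZMod (2n+2)`: its image in `ZMod 2` under the
natural ring homomorphism. -/
def parity (n : ℕ) (a : ZMod (2 * n + 2)) : ZMod 2 :=
  ZMod.castHom (show (2 : ℕ) ∣ 2 * n + 2 from ⟨n + 1, by ring⟩) (ZMod 2) a

/-- Adjacency in the stable Kneser graph `SG_{n,2}`: two distinct stable n-sets
are adjacent iff they are disjoint. -/
def SGAdj (n : ℕ) (α β : Finset (ZMod (2 * n + 2))) : Prop :=
  IsStable n α ∧ IsStable n β ∧ α ≠ β ∧ Disjoint α β

/-- `P_i`: stable n-sets with exactly `i` even elements and `n - i` odd elements. -/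
def Pset (n i : ℕ) : Set (Finset (ZMod (2 * n + 2))) :=
  {α | IsStable n α ∧ (α.filter fun a => parity n a = 0).card = i ∧
       (α.filter fun a => parity n a = 1).card = n - i}

/-!
Together with `α ⊕ 1`, a stable `n`-set `α` covers all but two points of `ZMod (2n+2)`, its
free points. Call `a ∈ α` a boundary element if `a + 2 ∉ α`; then `a + 2` is free. Every parity
class meeting `α` contains a boundary element, because the `+2`-orbit of a point has
`n + 1 > |α|` elements, and a boundary element forces a free point of the other parity (`a + 3`,
or `c + 2` for a boundary element `c` of the other parity). So `α` has exactly one even boundary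
element `a`, and `π = (α \ {a}) ∪ {a + 1}` works.

Conversely, `|α ∩ π| = n - 1` and the parity counts make `π = (α \ {a'}) ∪ {b}` with `a'` even and
`b` odd. Since `(α ⊖ 2) ∩ α` consists of the non-boundary elements of `α`, the condition
`|(α ⊖ 2) ∩ π| = n - 1` says that `α` has exactly `[b + 2 ∈ α]` boundary elements besides `a'`.
This forces `a' = a`, and then stability of `π` and the two free points force `b = a + 1`.
-/

open Finset

section Exchange

variable {ι : Type*} [DecidableEq ι]

theorem Finset.exists_eq_insert_erase_of_card_inter_add_one {s t : Finset ι}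
    (hts : t.card = s.card) (h : (s ∩ t).card + 1 = s.card) :
    ∃ a ∈ s, ∃ b ∉ s, t = insert b (s.erase a) := by
  obtain ⟨a, ha⟩ : ∃ a, s \ t = {a} :=
    card_eq_one.1 (by have := card_sdiff_add_card_inter s t; omega)
  obtain ⟨b, hb⟩ : ∃ b, t \ s = {b} :=
    card_eq_one.1 (by have := card_sdiff_add_card_inter t s; rw [inter_comm] at this; omega)
  refine ⟨a, (mem_sdiff.1 (ha ▸ mem_singleton_self a)).1,
    b, (mem_sdiff.1 (hb ▸ mem_singleton_self b)).2, ?_⟩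
  ext x
  have hxa := Finset.ext_iff.1 ha x
  have hxb := Finset.ext_iff.1 hb x
  simp only [mem_sdiff, mem_singleton] at hxa hxb
  simp only [mem_insert, mem_erase]
  tauto

theorem Finset.card_filter_insert_erase_add (p : ι → Prop) [DecidablePred p] {s : Finset ι}
    {a b : ι} (ha : a ∈ s) (hb : b ∉ s) :
    ((insert b (s.erase a)).filter p).card + (if p a then 1 else 0)
      = (s.filter p).card + if p b then 1 else 0 := by
  simp only [card_filter]
  rw [sum_insert fun h => hb (mem_of_mem_erase h), ← add_sum_erase s _ ha]
  ring

end Exchange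

section Parity

variable {n : ℕ}

theorem parity_add (x y : ZMod (2 * n + 2)) : parity n (x + y) = parity n x + parity n y :=
  map_add _ x y

theorem parity_add_one (x : ZMod (2 * n + 2)) : parity n (x + 1) = parity n x + 1 := by
  rw [parity_add]
  exact congrArg _ (map_one _)

theorem parity_two : parity n 2 = 0 :=
  map_ofNat (ZMod.castHom _ (ZMod 2)) 2

theorem parity_add_two (x : ZMod (2 * n + 2)) : parity n (x + 2) = parity n x := by
  rw [parity_add, parity_two, add_zero]

theorem parity_nsmul_two (k : ℕ) : parity n (k • 2) = 0 := by
  rw [parity, map_nsmul, ← parity, parity_two, smul_zero]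

theorem parity_add_one_ne (x : ZMod (2 * n + 2)) : parity n (x + 1) ≠ parity n x := by
  rw [parity_add_one]
  exact add_ne_left.2 one_ne_zero

theorem parity_add_three_ne (x : ZMod (2 * n + 2)) : parity n (x + 3) ≠ parity n x := by
  rw [show x + 3 = x + 1 + 2 by ring, parity_add_two]
  exact parity_add_one_ne x

theorem parity_eq_of_ne_of_ne {x y z : ZMod (2 * n + 2)} (hx : parity n x ≠ parity n z)
    (hy : parity n y ≠ parity n z) : parity n x = parity n y := by
  generalize parity n x = p, parity n y = q, parity n z = r at *
  revert p q r; decide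

theorem add_one_ne_self (x : ZMod (2 * n + 2)) : x + 1 ≠ x :=
  ne_of_apply_ne (parity n) (parity_add_one_ne x)

theorem four_ne_zero_of_two_le (hn : 2 ≤ n) : (4 : ZMod (2 * n + 2)) ≠ 0 := by
  intro h
  have := (ZMod.natCast_eq_zero_iff 4 (2 * n + 2)).1 (by exact_mod_cast h)
  exact absurd (Nat.le_of_dvd (by norm_num) this) (by omega)

theorem card_filter_parity_eq_one (s : Finset (ZMod (2 * n + 2))) :
    (s.filter fun x => parity n x = 1).card = s.card - (s.filter fun x => parity n x = 0).card := by
  rw [filter_congr fun x _ => show parity n x = 1 ↔ ¬parity n x = 0 by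
    generalize parity n x = p; revert p; decide]
  have := card_filter_add_card_filter_not (s := s) fun x => parity n x = 0
  omega

theorem addOrderOf_two : addOrderOf (2 : ZMod (2 * n + 2)) = n + 1 := by
  have h := ZMod.addOrderOf_coe 2 (n := 2 * n + 2) (by omega)
  rw [Nat.gcd_eq_right ⟨n + 1, by ring⟩, Nat.cast_ofNat] at h
  omega

end Parity

section Stable

variable {n : ℕ} {α : Finset (ZMod (2 * n + 2))} {a b : ZMod (2 * n + 2)}

theorem mem_oplus {j x : ZMod (2 * n + 2)} : x ∈ oplus n α j ↔ x - j ∈ α := by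
  simp [oplus, sub_eq_add_neg]

theorem mem_ominus {j x : ZMod (2 * n + 2)} : x ∈ ominus n α j ↔ x + j ∈ α := by
  simp [ominus, sub_eq_iff_eq_add]

def freePoints (α : Finset (ZMod (2 * n + 2))) : Finset (ZMod (2 * n + 2)) :=
  (α ∪ oplus n α 1)ᶜ

theorem mem_freePoints {t : ZMod (2 * n + 2)} : t ∈ freePoints α ↔ t ∉ α ∧ t - 1 ∉ α := by
  simp [freePoints, mem_oplus]

theorem card_freePoints (hα : IsStable n α) : (freePoints α).card = 2 := by
  have hdisj : Disjoint α (oplus n α 1) :=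
    disjoint_left.2 fun x hx hx' => hα.2 (x - 1) ⟨mem_oplus.1 hx', by rwa [sub_add_cancel]⟩
  rw [freePoints, card_compl, card_union_of_disjoint hdisj, oplus,
    card_image_of_injective _ (add_left_injective 1), hα.1, ZMod.card]
  omega

theorem eq_or_eq_of_mem_freePoints (hα : IsStable n α) {s t u : ZMod (2 * n + 2)}
    (hs : s ∈ freePoints α) (ht : t ∈ freePoints α) (hst : s ≠ t) (hu : u ∈ freePoints α) :
    u = s ∨ u = t := by
  obtain ⟨x, y, -, hxy⟩ := card_eq_two.1 (card_freePoints hα)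
  simp only [hxy, mem_insert, mem_singleton] at hs ht hu
  grind

def boundary (α : Finset (ZMod (2 * n + 2))) : Finset (ZMod (2 * n + 2)) :=
  α.filter fun a => a + 2 ∉ α

theorem add_two_mem_freePoints (hα : IsStable n α) (ha : a ∈ boundary α) :
    a + 2 ∈ freePoints α := by
  obtain ⟨haα, ha2⟩ := mem_filter.1 ha
  refine mem_freePoints.2 ⟨ha2, ?_⟩
  rw [show a + 2 - 1 = a + 1 by ring]
  exact fun h => hα.2 a ⟨haα, h⟩

theorem exists_mem_boundary_parity_eq (hα : α.card = n) {x : ZMod (2 * n + 2)} (hx : x ∈ α) :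
    ∃ a ∈ boundary α, parity n a = parity n x := by
  by_contra! h
  have horbit : ∀ k : ℕ, x + k • 2 ∈ α := by
    intro k
    induction k with
    | zero => simpa using hx
    | succ k ih =>
      by_contra hk
      rw [succ_nsmul, ← add_assoc] at hk
      exact h _ (mem_filter.2 ⟨ih, hk⟩) (by rw [parity_add, parity_nsmul_two, add_zero])
  have hinj : Set.InjOn (fun k : ℕ => x + k • 2) (range (n + 1)) := by
    have h2 := nsmul_injOn_Iio_addOrderOf (x := (2 : ZMod (2 * n + 2)))
    rw [addOrderOf_two] at h2
    rw [coe_range]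
    exact (add_right_injective x).comp_injOn h2
  have hle := card_le_card (image_subset_iff.2 fun k _ => horbit k :
    (range (n + 1)).image (fun k : ℕ => x + k • 2) ⊆ α)
  rw [card_image_of_injOn hinj, card_range] at hle
  omega

theorem exists_mem_freePoints_parity_ne (hα : IsStable n α) (ha : a ∈ boundary α) :
    ∃ t ∈ freePoints α, parity n t ≠ parity n a := by
  by_cases h3 : a + 3 ∈ α
  · obtain ⟨c, hc, hpar⟩ := exists_mem_boundary_parity_eq hα.1 h3
    refine ⟨c + 2, add_two_mem_freePoints hα hc, ?_⟩
    rw [parity_add_two, hpar]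
    exact parity_add_three_ne a
  · refine ⟨a + 3, mem_freePoints.2 ⟨h3, ?_⟩, parity_add_three_ne a⟩
    rw [show a + 3 - 1 = a + 2 by ring]
    exact (mem_filter.1 ha).2

theorem boundary_eq_of_parity_eq (hα : IsStable n α) (ha : a ∈ boundary α) (hb : b ∈ boundary α)
    (hab : parity n a = parity n b) : a = b := by
  by_contra hne
  obtain ⟨t, ht, htpar⟩ := exists_mem_freePoints_parity_ne hα ha
  rcases eq_or_eq_of_mem_freePoints hα (add_two_mem_freePoints hα ha)
    (add_two_mem_freePoints hα hb) (fun h => hne (add_right_cancel h)) ht with rfl | rfl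
  · exact htpar (parity_add_two a)
  · exact htpar (by rw [parity_add_two, hab])

theorem IsStable.insert_add_one_erase (hα : IsStable n α) (ha : a ∈ boundary α) :
    IsStable n (insert (a + 1) (α.erase a)) := by
  obtain ⟨haα, ha2⟩ := mem_filter.1 ha
  have ha1 : a + 1 ∉ α := fun h => hα.2 a ⟨haα, h⟩
  refine ⟨by rw [card_insert_of_notMem fun h => ha1 (mem_of_mem_erase h), card_erase_add_one haα,
    hα.1], ?_⟩
  rintro x ⟨hx, hx1⟩
  simp only [mem_insert, mem_erase] at hx hx1
  rcases hx with rfl | ⟨hxa, hxα⟩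
  · rcases hx1 with h | ⟨-, h⟩
    · exact parity_add_one_ne (a + 1) (congrArg _ h)
    · exact ha2 (by rwa [add_assoc, one_add_one_eq_two] at h)
  · rcases hx1 with h | ⟨-, h⟩
    · exact hxa (add_right_cancel h)
    · exact hα.2 x ⟨hxα, h⟩

theorem card_boundary_erase (hα : IsStable n α) (ha : a ∈ boundary α) :
    ((boundary α).erase a).card = if a + 3 ∈ α then 1 else 0 := by
  split_ifs with h3
  · obtain ⟨c, hc, hcpar⟩ := exists_mem_boundary_parity_eq hα.1 h3
    have hca : parity n c ≠ parity n a := hcpar ▸ parity_add_three_ne a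
    refine card_eq_one.2 ⟨c, Finset.ext fun x => ?_⟩
    simp only [mem_erase, mem_singleton]
    constructor
    · rintro ⟨hxa, hx⟩
      exact boundary_eq_of_parity_eq hα hx hc
        (parity_eq_of_ne_of_ne (fun h => hxa (boundary_eq_of_parity_eq hα hx ha h)) hca)
    · rintro rfl
      exact ⟨ne_of_apply_ne _ hca, hc⟩
  · refine card_eq_zero.2 (eq_empty_iff_forall_notMem.2 fun x hx => ?_)
    obtain ⟨hxa, hx⟩ := mem_erase.1 hx
    have ha3 : a + 3 ∈ freePoints α :=
      mem_freePoints.2 ⟨h3, by rw [show a + 3 - 1 = a + 2 by ring]; exact (mem_filter.1 ha).2⟩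
    rcases eq_or_eq_of_mem_freePoints hα (add_two_mem_freePoints hα ha) ha3
      (ne_of_apply_ne (parity n) (by rw [parity_add_two]; exact (parity_add_three_ne a).symm))
      (add_two_mem_freePoints hα hx) with h | h
    · exact hxa (add_right_cancel h)
    · have hxa1 : x = a + 1 := by linear_combination h
      exact hα.2 a ⟨(mem_filter.1 ha).1, hxa1 ▸ (mem_filter.1 hx).1⟩

theorem eq_of_card_boundary_erase (hα : IsStable n α) {a' : ZMod (2 * n + 2)}
    (ha : a ∈ boundary α) (ha' : parity n a' = parity n a) (hb : parity n b ≠ parity n a)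
    (h : ((boundary α).erase a').card = if b + 2 ∈ α then 1 else 0) : a' = a := by
  by_contra hne
  have haB : a ∈ (boundary α).erase a' := mem_erase.2 ⟨Ne.symm hne, ha⟩
  split_ifs at h with hb2
  · obtain ⟨c, hc, hcpar⟩ := exists_mem_boundary_parity_eq hα.1 hb2
    rw [parity_add_two] at hcpar
    have hcB : c ∈ (boundary α).erase a' :=
      mem_erase.2 ⟨ne_of_apply_ne (parity n) (by rw [hcpar, ha']; exact hb), hc⟩
    exact hb (hcpar ▸ congrArg _ (card_le_one.1 h.le c hcB a haB))
  · exact (card_ne_zero_of_mem haB) h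

theorem card_ominus_inter_insert_erase_add (hb : b ∉ α) :
    (ominus n α 2 ∩ insert b (α.erase a)).card + ((boundary α).erase a).card
      = (α.erase a).card + if b + 2 ∈ α then 1 else 0 := by
  have hinter : ∀ s, ominus n α 2 ∩ s = s.filter (· + 2 ∈ α) := fun s => by
    ext x
    rw [mem_inter, mem_ominus, mem_filter, and_comm]
  rw [hinter, boundary, ← filter_erase, filter_insert,
    ← card_filter_add_card_filter_not (s := α.erase a) fun x => x + 2 ∈ α]
  split_ifs
  · rw [card_insert_of_notMem fun h => hb (mem_of_mem_erase (mem_filter.1 h).1)]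
    ring
  · rfl

theorem insert_add_one_erase_mem_Pset {i : ℕ} (hα : IsStable n α)
    (hev : (α.filter fun x => parity n x = 0).card = i) (ha : a ∈ boundary α)
    (hpar : parity n a = 0) : insert (a + 1) (α.erase a) ∈ Pset n (i - 1) := by
  have hstab := hα.insert_add_one_erase ha
  have ha1 : parity n (a + 1) ≠ 0 := hpar ▸ parity_add_one_ne a
  have hcount := card_filter_insert_erase_add (parity n · = 0) (mem_filter.1 ha).1
    (fun h => hα.2 a ⟨(mem_filter.1 ha).1, h⟩)
  rw [if_pos hpar, if_neg ha1, hev] at hcount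
  refine ⟨hstab, by omega, ?_⟩
  rw [card_filter_parity_eq_one, hstab.1]
  omega

theorem sub_three_mem_boundary (hn : 2 ≤ n) (hα : IsStable n α) (ha : a ∈ boundary α)
    (h : a - 1 ∈ freePoints α) : a - 3 ∈ boundary α := by
  have ha2 : a - 2 ∉ α := by
    have := (mem_freePoints.1 h).2
    rwa [show a - 1 - 1 = a - 2 by ring] at this
  have ha2' : a - 2 ∉ freePoints α := fun h2 => by
    rcases eq_or_eq_of_mem_freePoints hα h (add_two_mem_freePoints hα ha)
      (ne_of_apply_ne (parity n) (by
        rw [parity_add_two, ← sub_add_cancel a 1, add_sub_cancel_right]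
        exact (parity_add_one_ne _).symm)) h2 with h' | h'
    · exact add_one_ne_self (a - 2) (by linear_combination -h')
    · exact four_ne_zero_of_two_le hn (by linear_combination -h')
  refine mem_filter.2 ⟨?_, ?_⟩
  · by_contra h3
    exact ha2' (mem_freePoints.2 ⟨ha2, by rwa [show a - 2 - 1 = a - 3 by ring]⟩)
  · rw [show a - 3 + 2 = a - 1 by ring]
    exact (mem_freePoints.1 h).1

theorem eq_add_one_of_isStable_insert_erase (hn : 2 ≤ n) (hα : IsStable n α)
    (ha : a ∈ boundary α) (hb : b ∉ α) (hpar : parity n b ≠ parity n a)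
    (hπ : IsStable n (insert b (α.erase a)))
    (h : ((boundary α).erase a).card = if b + 2 ∈ α then 1 else 0) : b = a + 1 := by
  by_contra hne
  have hmem : ∀ x ∈ α, x ≠ a → x ∈ insert b (α.erase a) :=
    fun x hx hxa => mem_insert_of_mem (mem_erase.2 ⟨hxa, hx⟩)
  have hbπ : b ∈ insert b (α.erase a) := mem_insert_self b _
  have hbfree : b ∈ freePoints α := by
    refine mem_freePoints.2 ⟨hb, fun h1 => hπ.2 (b - 1) ⟨hmem _ h1 ?_, by rwa [sub_add_cancel]⟩⟩
    exact fun h' => hne (by linear_combination h')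
  by_cases hb1 : b + 1 ∈ α
  · obtain rfl : b = a - 1 :=
      eq_sub_of_add_eq (by_contra fun h' => hπ.2 b ⟨hbπ, hmem _ hb1 h'⟩)
    have ha3 : a - 3 ≠ a := ne_of_apply_ne (parity n) fun h' =>
      parity_add_three_ne (a - 3) (by rw [sub_add_cancel, h'])
    have ha1 : a - 1 + 2 ∉ α := by
      rw [show a - 1 + 2 = a + 1 by ring]
      exact fun h' => hα.2 a ⟨(mem_filter.1 ha).1, h'⟩
    rw [if_neg ha1] at h
    exact card_ne_zero_of_mem (mem_erase.2 ⟨ha3, sub_three_mem_boundary hn hα ha hbfree⟩) h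
  · have hb1free : b + 1 ∈ freePoints α := mem_freePoints.2 ⟨hb1, by rwa [add_sub_cancel_right]⟩
    rcases eq_or_eq_of_mem_freePoints hα hbfree (add_two_mem_freePoints hα ha)
      (ne_of_apply_ne (parity n) (by rwa [parity_add_two])) hb1free with h' | h'
    · exact add_one_ne_self b h'
    · exact hne (by linear_combination h')

theorem insert_add_one_erase_spec {i : ℕ} (hα : IsStable n α)
    (hev : (α.filter fun x => parity n x = 0).card = i) (ha : a ∈ boundary α)
    (hpar : parity n a = 0) :
    insert (a + 1) (α.erase a) ∈ Pset n (i - 1) ∧ (α ∩ insert (a + 1) (α.erase a)).card = n - 1 ∧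
      (ominus n α 2 ∩ insert (a + 1) (α.erase a)).card = n - 1 := by
  have haα : a ∈ α := (mem_filter.1 ha).1
  have ha1 : a + 1 ∉ α := fun h => hα.2 a ⟨haα, h⟩
  refine ⟨insert_add_one_erase_mem_Pset hα hev ha hpar, ?_, ?_⟩
  · rw [inter_insert_of_notMem ha1, inter_eq_right.2 (erase_subset a α), card_erase_of_mem haα,
      hα.1]
  · have h := card_ominus_inter_insert_erase_add (a := a) ha1
    rw [card_boundary_erase hα ha, show a + 1 + 2 = a + 3 by ring, card_erase_of_mem haα,
      hα.1] at h
    omega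

theorem eq_insert_add_one_erase {i : ℕ} (hn : 2 ≤ n) (hα : IsStable n α)
    (hev : (α.filter fun x => parity n x = 0).card = i) (ha : a ∈ boundary α)
    (hpar : parity n a = 0) {π : Finset (ZMod (2 * n + 2))} (hπ : π ∈ Pset n (i - 1))
    (hinter : (α ∩ π).card = n - 1) (hom : (ominus n α 2 ∩ π).card = n - 1) :
    π = insert (a + 1) (α.erase a) := by
  obtain ⟨a', ha', b, hb, rfl⟩ := exists_eq_insert_erase_of_card_inter_add_one
    (hπ.1.1.trans hα.1.symm) (by rw [hα.1]; omega)
  obtain ⟨ha'par, hbpar⟩ : parity n a' = 0 ∧ ¬parity n b = 0 := by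
    have hi : 0 < i := hev ▸ card_pos.2 ⟨a, mem_filter.2 ⟨(mem_filter.1 ha).1, hpar⟩⟩
    have hcount := card_filter_insert_erase_add (parity n · = 0) ha' hb
    rw [hπ.2.1, hev] at hcount
    split_ifs at hcount with h1 h2 <;> first | exact ⟨h1, h2⟩ | omega
  have hB := card_ominus_inter_insert_erase_add (a := a') hb
  rw [hom, card_erase_of_mem ha', hα.1] at hB
  replace hB : ((boundary α).erase a').card = if b + 2 ∈ α then 1 else 0 := by
    split_ifs at hB ⊢ <;> omega
  obtain rfl := eq_of_card_boundary_erase hα ha (ha'par.trans hpar.symm) (hpar ▸ hbpar) hB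
  rw [eq_add_one_of_isStable_insert_erase hn hα ha hb (hpar ▸ hbpar) hπ.1 hB]

end Stable

theorem unique_lower_neighbor_general (n i : ℕ) (hn : 2 ≤ n) (hi1 : 1 ≤ i)
    (α : Finset (ZMod (2 * n + 2))) (hα : α ∈ Pset n i) :
    ∃! π : Finset (ZMod (2 * n + 2)), π ∈ Pset n (i - 1) ∧
      (α ∩ π).card = n - 1 ∧ ((ominus n α 2) ∩ π).card = n - 1 := by
  obtain ⟨hstab, hev, -⟩ := hα
  obtain ⟨x, hx⟩ : (α.filter fun x => parity n x = 0).Nonempty := by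
    rw [← card_pos, hev]
    omega
  obtain ⟨a, ha, hapar⟩ := exists_mem_boundary_parity_eq hstab.1 (mem_filter.1 hx).1
  rw [(mem_filter.1 hx).2] at hapar
  exact ⟨_, insert_add_one_erase_spec hstab hev ha hapar,
    fun π ⟨hπ, hinter, hom⟩ => eq_insert_add_one_erase hn hstab hev ha hapar hπ hinter hom⟩

/-- For `α ∈ P_i` with `1 ≤ i ≤ n`, there is a unique `π ∈ P_{i-1}` with
`|α ∩ π| = n - 1` and `|(α ⊖ 2) ∩ π| = n - 1`. -/
theorem unique_lower_neighbor (n i : ℕ) (hn : 2 ≤ n) (hi1 : 1 ≤ i) (hi2 : i ≤ n)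
    (α : Finset (ZMod (2 * n + 2))) (hα : α ∈ Pset n i) :
    ∃! π : Finset (ZMod (2 * n + 2)), π ∈ Pset n (i - 1) ∧
      (α ∩ π).card = n - 1 ∧ ((ominus n α 2) ∩ π).card = n - 1 :=
  unique_lower_neighbor_general n i hn hi1 α hα
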